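/- arXiv:2112.04142 — 4 statements merged into one kernel-verified Lean document; each statement's English description precedes it below -/
import Mathlib

section
/- For all integers m, n ≥ 1, χ_la(P_{2m} ∨ O_{2n}) = 3. -/
open Finset SimpleGraph
open scoped Classical

/-- The induced vertex label (weight) of `x`: the sum of `f` over all edges incident to `x`. -/
noncomputable def vertexWeight {V : Type*} [Fintype V] (G : SimpleGraph V)
    (f : Sym2 V → ℕ) (x : V) : ℕ :=
  ∑ e ∈ G.edgeFinset.filter (fun e => x ∈ e), f e

/-- `f` is a local antimagic labeling of `G`: it restricts to a bijection from the edge set of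
`G` onto `{1, …, q}` (where `q` is the number of edges), and adjacent vertices get distinct
induced vertex labels. -/
def IsLocalAntimagic {V : Type*} [Fintype V] (G : SimpleGraph V) (f : Sym2 V → ℕ) : Prop :=
  Set.BijOn f G.edgeSet (Set.Icc 1 G.edgeSet.ncard) ∧
  ∀ ⦃x y : V⦄, G.Adj x y → vertexWeight G f x ≠ vertexWeight G f y

/-- The number of distinct induced vertex labels, `c(f)`. -/
noncomputable def colorCount {V : Type*} [Fintype V] (G : SimpleGraph V)
    (f : Sym2 V → ℕ) : ℕ :=
  (Finset.univ.image (vertexWeight G f)).card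

/-- The local antimagic chromatic number `χ_la(G)`. -/
noncomputable def chiLA {V : Type*} [Fintype V] (G : SimpleGraph V) : ℕ :=
  sInf { n | ∃ f : Sym2 V → ℕ, IsLocalAntimagic G f ∧ colorCount G f = n }

/-- The join `G ∨ H` of two vertex-disjoint graphs. -/
def joinG {α β : Type*} (G : SimpleGraph α) (H : SimpleGraph β) : SimpleGraph (α ⊕ β) :=
  SimpleGraph.fromRel (fun x y =>
    (∃ a b, x = Sum.inl a ∧ y = Sum.inl b ∧ G.Adj a b) ∨
    (∃ a b, x = Sum.inr a ∧ y = Sum.inr b ∧ H.Adj a b) ∨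
    (∃ a b, x = Sum.inl a ∧ y = Sum.inr b))

/-!
Two consecutive path vertices and a vertex of `O_{2n}` form a triangle, so `χ_la ≥ 3`.
For the upper bound the path edges get the labels `2m - 1, 2, 2m - 3, 4, …, 1` in order, so the
path contributes `2m - 1` to even vertices, `2m + 1` to odd ones and `1` to the last one. The
`4mn` edges to `O_{2n}` get the labels `2m, …, 4mn + 2m - 1`, arranged in a `2m × 2n` array with
constant column sums whose row sums compensate the path contributions. Even path vertices then
weigh `2mn² + 8mn - n - 2`, odd ones `6mn² + 4m - n`, and the vertices of `O_{2n}` weigh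
`4m²n + 4m² - m`; these three numbers are distinct unless `m = n = 1`, where the array is
replaced by a hand-made one.
-/

section LocalAntimagic
variable {V : Type*} [Fintype V]

lemma vertexWeight_eq_sum_ite (G : SimpleGraph V) (f : Sym2 V → ℕ) (x : V) :
    vertexWeight G f x = ∑ y, if G.Adj x y then f s(x, y) else 0 := by
  have himage : (G.neighborFinset x).image (fun y => s(x, y)) =
      G.edgeFinset.filter (fun e => x ∈ e) := by
    ext e
    induction e using Sym2.ind with
    | _ u v =>
      simp only [mem_image, mem_neighborFinset, mem_filter, mem_edgeFinset, mem_edgeSet,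
        Sym2.mem_iff, Sym2.eq_iff]
      constructor
      · rintro ⟨y, hy, ⟨rfl, rfl⟩ | ⟨rfl, rfl⟩⟩
        · exact ⟨hy, .inl rfl⟩
        · exact ⟨hy.symm, .inr rfl⟩
      · rintro ⟨h, rfl | rfl⟩
        · exact ⟨v, h, .inl ⟨rfl, rfl⟩⟩
        · exact ⟨u, h.symm, .inr ⟨rfl, rfl⟩⟩
  rw [vertexWeight, ← himage, sum_image fun y _ z _ h => Sym2.congr_right.mp h, ← sum_filter]
  simp [neighborFinset_eq_filter]

variable {G : SimpleGraph V} {f : Sym2 V → ℕ}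

lemma three_le_colorCount (hf : IsLocalAntimagic G f) {x y z : V}
    (hxy : G.Adj x y) (hxz : G.Adj x z) (hyz : G.Adj y z) : 3 ≤ colorCount G f := by
  have htriangle :
      ({vertexWeight G f x, vertexWeight G f y, vertexWeight G f z} : Finset ℕ).card = 3 :=
    card_eq_three.mpr ⟨_, _, _, hf.2 hxy, hf.2 hxz, hf.2 hyz, rfl⟩
  refine htriangle ▸ card_le_card ?_
  simp [insert_subset_iff]

lemma chiLA_eq_three_of_triangle {x y z : V} (hxy : G.Adj x y) (hxz : G.Adj x z) (hyz : G.Adj y z)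
    (hf : IsLocalAntimagic G f) (hc : colorCount G f = 3) : chiLA G = 3 :=
  le_antisymm (Nat.sInf_le ⟨f, hf, hc⟩)
    (le_csInf ⟨3, f, hf, hc⟩ fun _ ⟨_, hg, hk⟩ => hk ▸ three_le_colorCount hg hxy hxz hyz)

lemma isLocalAntimagic_of_bijOn {q : ℕ} (hf : Set.BijOn f G.edgeSet (Set.Icc 1 q))
    (hadj : ∀ ⦃x y⦄, G.Adj x y → vertexWeight G f x ≠ vertexWeight G f y) :
    IsLocalAntimagic G f := by
  have hcard : G.edgeSet.ncard = q := by
    rw [← hf.injOn.ncard_image, hf.image_eq, ← coe_Icc, Set.ncard_coe_finset, Nat.card_Icc,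
      Nat.add_sub_cancel]
  exact ⟨hcard ▸ hf, hadj⟩

end LocalAntimagic

lemma bijOn_univ_Icc_of_injective {ι : Type*} [Fintype ι] {f : ι → ℕ} {a b : ℕ}
    (hf : Function.Injective f) (hmaps : ∀ i, f i ∈ Set.Icc a b)
    (hcard : Fintype.card ι = b + 1 - a) : Set.BijOn f Set.univ (Set.Icc a b) := by
  have hrange : Set.range f = Set.Icc a b := by
    refine Set.eq_of_subset_of_ncard_le (Set.range_subset_iff.mpr hmaps) ?_ (Set.finite_Icc a b)
    rw [Set.ncard_range_of_injective hf, Nat.card_eq_fintype_card, hcard, ← coe_Icc,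
      Set.ncard_coe_finset, Nat.card_Icc]
  rw [← hrange, ← Set.image_univ]
  exact hf.injOn.bijOn_image

lemma sum_range_two_mul {M : Type*} [AddCommMonoid M] (f : ℕ → M) (k : ℕ) :
    ∑ i ∈ range (2 * k), f i = ∑ i ∈ range k, (f (2 * i) + f (2 * i + 1)) := by
  induction k with
  | zero => simp
  | succ k ih =>
    rw [show 2 * (k + 1) = 2 * k + 1 + 1 by ring, sum_range_succ, sum_range_succ, ih,
      sum_range_succ, add_assoc]

lemma sum_range_id_two_mul (k : ℕ) : ∑ i ∈ range (2 * k), i = k * (2 * k - 1) :=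
  Nat.eq_of_mul_eq_mul_right two_pos ((sum_range_id_mul_two (2 * k)).trans (by ring))

section Join
variable {α β : Type*} (G : SimpleGraph α) (H : SimpleGraph β)

@[simp] lemma joinG_adj_inl_inl {a b : α} :
    (joinG G H).Adj (Sum.inl a) (Sum.inl b) ↔ G.Adj a b := by
  simpa [joinG, G.adj_comm b a] using fun h : G.Adj a b => h.ne

@[simp] lemma joinG_adj_inr_inr {a b : β} :
    (joinG G H).Adj (Sum.inr a) (Sum.inr b) ↔ H.Adj a b := by
  simpa [joinG, H.adj_comm b a] using fun h : H.Adj a b => h.ne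

@[simp] lemma joinG_adj_inl_inr {a : α} {b : β} : (joinG G H).Adj (Sum.inl a) (Sum.inr b) := by
  simp [joinG]

@[simp] lemma joinG_adj_inr_inl {a : α} {b : β} : (joinG G H).Adj (Sum.inr b) (Sum.inl a) :=
  (joinG_adj_inl_inr G H).symm

variable {G}

def joinLabel (g : Sym2 α → ℕ) (h : α → β → ℕ) : Sym2 (α ⊕ β) → ℕ :=
  Sym2.lift ⟨fun
    | .inl a, .inl b => g s(a, b)
    | .inl a, .inr b => h a b
    | .inr b, .inl a => h a b
    | .inr _, .inr _ => 0, by rintro (a | b) (a' | b') <;> simp [Sym2.eq_swap]⟩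

variable (g : Sym2 α → ℕ) (h : α → β → ℕ)

@[simp] lemma joinLabel_inl_inl (a b : α) : joinLabel g h s(.inl a, .inl b) = g s(a, b) := rfl

@[simp] lemma joinLabel_inl_inr (a : α) (b : β) : joinLabel g h s(.inl a, .inr b) = h a b := rfl

@[simp] lemma joinLabel_inr_inl (a : α) (b : β) : joinLabel g h s(.inr b, .inl a) = h a b := rfl

lemma edgeSet_joinG_bot : (joinG G (⊥ : SimpleGraph β)).edgeSet =
    Sym2.map Sum.inl '' G.edgeSet ∪ Set.range fun p : α × β => s(.inl p.1, .inr p.2) := by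
  ext e
  induction e using Sym2.ind with
  | _ u v =>
    rcases u with a | b <;> rcases v with a' | b'
    · rw [Set.mem_union, ← Sym2.map_mk, (Sym2.map.injective Sum.inl_injective).mem_set_image]
      simp
    · simp
    · simp [Sym2.eq_swap]
    · simp only [joinG_adj_inr_inr, bot_adj, mem_edgeSet, Set.mem_union, Set.mem_image,
        Set.mem_range, false_iff, not_or, not_exists, not_and]
      refine ⟨fun e _ => ?_, by simp⟩
      induction e using Sym2.ind
      simp

lemma bijOn_joinLabel {S T : Set ℕ} (hg : Set.BijOn g G.edgeSet S)
    (hh : Set.BijOn (Function.uncurry h) Set.univ T) (hST : Disjoint S T) :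
    Set.BijOn (joinLabel g h) (joinG G (⊥ : SimpleGraph β)).edgeSet (S ∪ T) := by
  have hG : Set.BijOn (joinLabel g h) (Sym2.map Sum.inl '' G.edgeSet) S :=
    (Set.bijOn_comp_iff (Sym2.map.injective Sum.inl_injective).injOn).mp
      (by convert hg using 1; ext e; induction e using Sym2.ind; rfl)
  have hcross :
      Set.BijOn (joinLabel g h) (Set.range fun p : α × β => s(.inl p.1, .inr p.2)) T := by
    rw [← Set.image_univ]
    exact (Set.bijOn_comp_iff (fun p _ q _ hpq => by simpa [Prod.ext_iff] using hpq)).mp hh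
  have hdisj : Disjoint (Sym2.map Sum.inl '' G.edgeSet)
      (Set.range fun p : α × β => s(.inl p.1, .inr p.2)) :=
    Set.disjoint_left.mpr fun _ h1 h2 => hST.ne_of_mem (hG.mapsTo h1) (hcross.mapsTo h2) rfl
  rw [edgeSet_joinG_bot]
  exact hG.union hcross <| (Set.injOn_union hdisj).mpr ⟨hG.injOn, hcross.injOn,
    fun _ h1 _ h2 => hST.ne_of_mem (hG.mapsTo h1) (hcross.mapsTo h2)⟩

variable [Fintype α] [Fintype β]

lemma vertexWeight_joinLabel_inl (a : α) :
    vertexWeight (joinG G (⊥ : SimpleGraph β)) (joinLabel g h) (.inl a) =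
      vertexWeight G g a + ∑ b, h a b := by
  simp [vertexWeight_eq_sum_ite, Fintype.sum_sum_type]

lemma vertexWeight_joinLabel_inr (b : β) :
    vertexWeight (joinG G (⊥ : SimpleGraph β)) (joinLabel g h) (.inr b) = ∑ a, h a b := by
  simp [vertexWeight_eq_sum_ite, Fintype.sum_sum_type]

end Join

section Path

/-- Puts `pl k` on the edge joining `k` and `k + 1`. -/
def pathLabel (N : ℕ) (pl : ℕ → ℕ) : Sym2 (Fin N) → ℕ :=
  Sym2.lift ⟨fun a b => pl (min a.val b.val), fun _ _ => congrArg pl (min_comm _ _)⟩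

variable {N : ℕ} (pl : ℕ → ℕ)

lemma pathLabel_of_succ_eq {a b : Fin N} (hab : a.val + 1 = b.val) :
    pathLabel N pl s(a, b) = pl a.val := by
  simp [pathLabel, show a.val ≤ b.val by omega]

lemma bijOn_pathLabel {S : Set ℕ} (hpl : Set.BijOn pl (Set.Iio (N - 1)) S) :
    Set.BijOn (pathLabel N pl) (pathGraph N).edgeSet S := by
  have hedge :
      ∀ e ∈ (pathGraph N).edgeSet, ∃ a b : Fin N, a.val + 1 = b.val ∧ e = s(a, b) := by
    intro e he
    induction e using Sym2.ind with
    | _ a b =>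
      rcases pathGraph_adj.mp he with h | h
      · exact ⟨a, b, h, rfl⟩
      · exact ⟨b, a, h, Sym2.eq_swap⟩
  refine ⟨fun e he => ?_, fun e he e' he' hee' => ?_, fun v hv => ?_⟩
  · obtain ⟨a, b, hab, rfl⟩ := hedge e he
    rw [pathLabel_of_succ_eq pl hab]
    exact hpl.mapsTo (show a.val < N - 1 by omega)
  · obtain ⟨a, b, hab, rfl⟩ := hedge e he
    obtain ⟨a', b', hab', rfl⟩ := hedge e' he'
    rw [pathLabel_of_succ_eq pl hab, pathLabel_of_succ_eq pl hab'] at hee'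
    have := hpl.injOn (show a.val < N - 1 by omega) (show a'.val < N - 1 by omega) hee'
    obtain rfl : a = a' := Fin.ext this
    obtain rfl : b = b' := Fin.ext (by omega)
    rfl
  · obtain ⟨k, hk, rfl⟩ := hpl.surjOn hv
    have hk : k < N - 1 := hk
    exact ⟨s(⟨k, by omega⟩, ⟨k + 1, by omega⟩), pathGraph_adj.mpr (.inl rfl),
      pathLabel_of_succ_eq pl rfl⟩

lemma vertexWeight_pathLabel (a : Fin N) :
    vertexWeight (pathGraph N) (pathLabel N pl) a =
      (if 0 < a.val then pl (a.val - 1) else 0) + if a.val + 1 < N then pl a.val else 0 := by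
  have hsplit : ∀ b : Fin N, (if (pathGraph N).Adj a b then pathLabel N pl s(a, b) else 0) =
      (if b.val = a.val - 1 ∧ 0 < a.val then pl (a.val - 1) else 0) +
        if b.val = a.val + 1 then pl a.val else 0 := by
    intro b
    simp only [pathGraph_adj, pathLabel, Sym2.lift_mk]
    split_ifs <;> first | omega | simp_all
  rw [vertexWeight_eq_sum_ite, sum_congr rfl fun b _ => hsplit b, sum_add_distrib,
    Fin.sum_univ_eq_sum_range (fun b => if b = a.val - 1 ∧ 0 < a.val then pl (a.val - 1) else 0),
    Fin.sum_univ_eq_sum_range (fun b => if b = a.val + 1 then pl a.val else 0)]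
  simp only [ite_and, sum_ite_eq', mem_range, show a.val - 1 < N by omega, if_true]

end Path

section PathJoin
variable {N M : ℕ} {pl : ℕ → ℕ} {jl : Fin N → Fin M → ℕ}

lemma bijOn_joinLabel_pathLabel (hN : 1 ≤ N) (hM : 1 ≤ M)
    (hpl : Set.BijOn pl (Set.Iio (N - 1)) (Set.Ico 1 N))
    (hjl : Set.BijOn (Function.uncurry jl) Set.univ (Set.Icc N (N * M + N - 1))) :
    Set.BijOn (joinLabel (pathLabel N pl) jl)
      (joinG (pathGraph N) (⊥ : SimpleGraph (Fin M))).edgeSet (Set.Icc 1 (N * M + N - 1)) := by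
  have hNM : N ≤ N * M + N - 1 := by have := Nat.le_mul_of_pos_right N hM; omega
  rw [← Set.Ico_union_Icc_eq_Icc hN hNM]
  refine bijOn_joinLabel _ _ (bijOn_pathLabel pl hpl) hjl ?_
  exact Set.disjoint_left.mpr fun v h1 h2 => by
    simp only [Set.mem_Ico, Set.mem_Icc] at h1 h2
    omega

theorem chiLA_joinG_pathGraph_bot_eq_three (hN : 2 ≤ N) (hM : 1 ≤ M) {x y c : ℕ}
    (hpl : Set.BijOn pl (Set.Iio (N - 1)) (Set.Ico 1 N))
    (hjl : Set.BijOn (Function.uncurry jl) Set.univ (Set.Icc N (N * M + N - 1)))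
    (hrow : ∀ i : Fin N, vertexWeight (pathGraph N) (pathLabel N pl) i + ∑ j, jl i j =
      if i.val % 2 = 0 then x else y)
    (hcol : ∀ j : Fin M, ∑ i, jl i j = c) (hxy : x ≠ y) (hxc : x ≠ c) (hyc : y ≠ c) :
    chiLA (joinG (pathGraph N) (⊥ : SimpleGraph (Fin M))) = 3 := by
  set f := joinLabel (pathLabel N pl) jl
  have hweight_inl (i : Fin N) : vertexWeight (joinG (pathGraph N) ⊥) f (.inl i) =
      if i.val % 2 = 0 then x else y :=
    (vertexWeight_joinLabel_inl _ _ i).trans (hrow i)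
  have hweight_inr (j : Fin M) : vertexWeight (joinG (pathGraph N) ⊥) f (.inr j) = c :=
    (vertexWeight_joinLabel_inr _ _ j).trans (hcol j)
  have hf : IsLocalAntimagic (joinG (pathGraph N) ⊥) f := by
    refine isLocalAntimagic_of_bijOn (bijOn_joinLabel_pathLabel (by omega) hM hpl hjl) ?_
    rintro (a | j) (b | j') hadj
    · rw [joinG_adj_inl_inl, pathGraph_adj] at hadj
      rw [hweight_inl, hweight_inl]
      split_ifs <;> omega
    · rw [hweight_inl, hweight_inr]
      split_ifs <;> omega
    · rw [hweight_inl, hweight_inr]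
      split_ifs <;> omega
    · simp at hadj
  have hc : colorCount (joinG (pathGraph N) ⊥) f = 3 := by
    rw [colorCount, card_eq_three]
    refine ⟨x, y, c, hxy, hxc, hyc, ?_⟩
    ext w
    simp only [mem_image, mem_univ, true_and, Sum.exists, hweight_inl, hweight_inr, mem_insert,
      mem_singleton]
    constructor
    · rintro (⟨i, rfl⟩ | ⟨j, rfl⟩)
      · split_ifs <;> simp
      · simp
    · rintro (rfl | rfl | rfl)
      · exact .inl ⟨⟨0, by omega⟩, by simp⟩
      · exact .inl ⟨⟨1, by omega⟩, by simp⟩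
      · exact .inr ⟨⟨0, by omega⟩, rfl⟩
  refine chiLA_eq_three_of_triangle (x := .inl ⟨0, by omega⟩) (y := .inl ⟨1, by omega⟩)
    (z := .inr ⟨0, hM⟩) ?_ (by simp) (by simp) hf hc
  simp [pathGraph_adj]

end PathJoin

section Construction
variable (m n : ℕ)

def pathEdgeLabel (k : ℕ) : ℕ := if k % 2 = 1 then k + 1 else 2 * m - 1 - k

def evenRowDigit (j : ℕ) : ℕ := if n ≤ j ∧ j < 2 * n - 1 then 2 * n - 1 - j else j

def hiDigit (i j : ℕ) : ℕ :=
  if i % 2 = 0 then evenRowDigit n j else 2 * n - 1 - evenRowDigit n j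

def lastColPerm (i : ℕ) : ℕ := if i < 2 * m - 1 then 2 * m - 2 - i else 2 * m - 1

def loDigit (i j : ℕ) : ℕ :=
  if j < n then i else if j < 2 * n - 1 then 2 * m - 1 - i else lastColPerm m i

/-- Entry `(i, j)` of the array, in base `2m`. Every column contains each low digit once, and the
high digits of rows `2k` and `2k + 1` add up to `2n - 1`, so all column sums agree. -/
def crossLabel (i j : ℕ) : ℕ := 2 * m * (hiDigit n i j + 1) + loDigit m n i j

variable {m n}

lemma bijOn_pathEdgeLabel (hm : 1 ≤ m) :
    Set.BijOn (pathEdgeLabel m) (Set.Iio (2 * m - 1)) (Set.Ico 1 (2 * m)) := by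
  refine ⟨fun k hk => ?_, fun k hk k' hk' h => ?_, fun v hv => ?_⟩
  · simp only [Set.mem_Iio, Set.mem_Ico, pathEdgeLabel] at hk ⊢
    split_ifs <;> omega
  · simp only [Set.mem_Iio, pathEdgeLabel] at hk hk' h
    split_ifs at h <;> omega
  · simp only [Set.mem_Ico] at hv
    refine ⟨if v % 2 = 0 then v - 1 else 2 * m - 1 - v, ?_, ?_⟩
    · simp only [Set.mem_Iio]
      split_ifs <;> omega
    · simp only [pathEdgeLabel]
      split_ifs <;> omega

lemma loDigit_lt {i : ℕ} (j : ℕ) (hi : i < 2 * m) : loDigit m n i j < 2 * m := by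
  simp only [loDigit, lastColPerm]
  split_ifs <;> omega

lemma loDigit_loDigit {i : ℕ} (j : ℕ) (hi : i < 2 * m) :
    loDigit m n (loDigit m n i j) j = i := by
  simp only [loDigit, lastColPerm]
  split_ifs <;> omega

lemma crossLabel_div_mod {i : ℕ} (j : ℕ) (hi : i < 2 * m) :
    crossLabel m n i j / (2 * m) = hiDigit n i j + 1 ∧
      crossLabel m n i j % (2 * m) = loDigit m n i j :=
  (Nat.div_mod_unique (by omega)).mpr ⟨by rw [crossLabel, add_comm], loDigit_lt j hi⟩

lemma digits_injective {i j i' j' : ℕ} (hi : i < 2 * m) (hj : j < 2 * n) (hi' : i' < 2 * m)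
    (hj' : j' < 2 * n) (hhi : hiDigit n i j = hiDigit n i' j')
    (hlo : loDigit m n i j = loDigit m n i' j') : i = i' ∧ j = j' := by
  -- The parity of the low digit and the size of the high digit relative to `n` tell the parity
  -- of `i` and which of the blocks `j < n`, `n ≤ j < 2n - 1`, `j = 2n - 1` contains `j`.
  simp only [hiDigit, loDigit, evenRowDigit, lastColPerm] at hhi hlo
  split_ifs at hhi hlo <;> omega

lemma bijOn_crossLabel (hm : 1 ≤ m) :
    Set.BijOn (Function.uncurry fun (i : Fin (2 * m)) (j : Fin (2 * n)) => crossLabel m n i j)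
      Set.univ (Set.Icc (2 * m) (2 * m * (2 * n) + 2 * m - 1)) := by
  refine bijOn_univ_Icc_of_injective ?_ (fun ⟨i, j⟩ => ?_) (by simp; omega)
  · rintro ⟨i, j⟩ ⟨i', j'⟩ h
    obtain ⟨hdiv, hmod⟩ := crossLabel_div_mod (n := n) j i.isLt
    obtain ⟨hdiv', hmod'⟩ := crossLabel_div_mod (n := n) j' i'.isLt
    have h : crossLabel m n i j = crossLabel m n i' j' := h
    obtain ⟨hii', hjj'⟩ := digits_injective i.isLt j.isLt i'.isLt j'.isLt
      (by rw [h] at hdiv; omega) (by rw [h] at hmod; omega)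
    rw [Fin.ext hii', Fin.ext hjj']
  · have hhi : hiDigit n i j + 1 ≤ 2 * n := by
      have := j.isLt
      simp only [hiDigit, evenRowDigit]
      split_ifs <;> omega
    have := Nat.mul_le_mul_left (2 * m) hhi
    have := Nat.le_mul_of_pos_right (2 * m) (Nat.add_one_pos (hiDigit n i j))
    have := loDigit_lt (n := n) j i.isLt
    simp only [Function.uncurry_apply_pair, crossLabel, Set.mem_Icc]
    omega

end Construction

section Sums
variable {m n : ℕ}

lemma sum_hiDigit_col {j : ℕ} (hj : j < 2 * n) :
    ∑ i ∈ range (2 * m), hiDigit n i j = m * (2 * n - 1) := by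
  have hpair (k : ℕ) : hiDigit n (2 * k) j + hiDigit n (2 * k + 1) j = 2 * n - 1 := by
    simp only [hiDigit, evenRowDigit]
    split_ifs <;> omega
  rw [sum_range_two_mul, sum_congr rfl fun k _ => hpair k, sum_const, card_range, smul_eq_mul]

lemma sum_loDigit_col (j : ℕ) :
    ∑ i ∈ range (2 * m), loDigit m n i j = ∑ i ∈ range (2 * m), i :=
  sum_nbij' (loDigit m n · j) (loDigit m n · j)
    (fun _ hi => mem_range.mpr (loDigit_lt j (mem_range.mp hi)))
    (fun _ hi => mem_range.mpr (loDigit_lt j (mem_range.mp hi)))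
    (fun _ hi => loDigit_loDigit j (mem_range.mp hi))
    (fun _ hi => loDigit_loDigit j (mem_range.mp hi)) fun _ _ => rfl

lemma sum_crossLabel_col (hm : 1 ≤ m) {j : ℕ} (hj : j < 2 * n) :
    ∑ i ∈ range (2 * m), crossLabel m n i j = 4 * m ^ 2 * n + 4 * m ^ 2 - m := by
  simp only [crossLabel]
  rw [sum_add_distrib, ← mul_sum, sum_add_distrib, sum_hiDigit_col hj, sum_loDigit_col,
    sum_range_id_two_mul, sum_const, card_range, smul_eq_mul, mul_one]
  zify [show 1 ≤ 2 * n by omega, show 1 ≤ 2 * m by omega,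
    show m ≤ 4 * m ^ 2 * n + 4 * m ^ 2 from le_add_left (by nlinarith)]
  ring

lemma sum_evenRowDigit (hn : 1 ≤ n) :
    ∑ j ∈ range (2 * n), evenRowDigit n j = 2 * ∑ j ∈ range n, j + (2 * n - 1) := by
  have hlow : ∀ j ∈ range n, evenRowDigit n j = j := fun j hj => by
    simp [evenRowDigit, (mem_range.mp hj).not_ge]
  have hhigh : ∀ k ∈ range n, evenRowDigit n (n + k) =
      (n - 1 - k) + if k = n - 1 then 2 * n - 1 else 0 := fun k hk => by
    have := mem_range.mp hk
    simp only [evenRowDigit]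
    split_ifs <;> omega
  rw [show range (2 * n) = range (n + n) by rw [two_mul], sum_range_add, sum_congr rfl hlow,
    sum_congr rfl hhigh, sum_add_distrib, sum_ite_eq', if_pos (mem_range.mpr (by omega)),
    sum_range_reflect (fun k => k) n]
  ring

lemma sum_hiDigit_row_odd {i : ℕ} (hi : i % 2 = 1) :
    ∑ j ∈ range (2 * n), hiDigit n i j + ∑ j ∈ range (2 * n), evenRowDigit n j =
      2 * n * (2 * n - 1) := by
  have hcompl : ∀ j ∈ range (2 * n), hiDigit n i j + evenRowDigit n j = 2 * n - 1 := by
    intro j hj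
    have := mem_range.mp hj
    simp only [hiDigit, evenRowDigit]
    split_ifs <;> omega
  rw [← sum_add_distrib, sum_congr rfl hcompl, sum_const, card_range, smul_eq_mul]

lemma sum_loDigit_row (hn : 1 ≤ n) {i : ℕ} (hi : i < 2 * m) :
    ∑ j ∈ range (2 * n), loDigit m n i j = (n - 1) * (2 * m - 1) + i + lastColPerm m i := by
  have hlow : ∀ j ∈ range n, loDigit m n i j = i := fun j hj => by
    simp [loDigit, mem_range.mp hj]
  have hmid : ∀ k ∈ range (n - 1), loDigit m n i (n + k) = 2 * m - 1 - i := fun k hk => by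
    have := mem_range.mp hk
    simp only [loDigit]
    split_ifs <;> omega
  have hlast : loDigit m n i (n + (n - 1)) = lastColPerm m i := by
    simp only [loDigit]
    split_ifs <;> first | rfl | omega
  rw [show 2 * n = n + (n - 1) + 1 by omega, sum_range_succ, sum_range_add, sum_congr rfl hlow,
    sum_congr rfl hmid, hlast, sum_const, sum_const, card_range, card_range, smul_eq_mul,
    smul_eq_mul]
  zify [hn, show 1 ≤ 2 * m by omega, show i ≤ 2 * m - 1 by omega]
  ring

end Sums

section Weights
variable {m n : ℕ}

lemma pathWeight_add_lastColPerm (hm : 1 ≤ m) (a : Fin (2 * m)) :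
    vertexWeight (pathGraph (2 * m)) (pathLabel (2 * m) (pathEdgeLabel m)) a + a +
        lastColPerm m a = if a.val % 2 = 0 then 4 * m - 3 else 4 * m - 1 := by
  rw [vertexWeight_pathLabel]
  simp only [pathEdgeLabel, lastColPerm]
  split_ifs <;> omega

lemma pathWeight_add_sum_crossLabel (hm : 1 ≤ m) (hn : 1 ≤ n) (a : Fin (2 * m)) :
    vertexWeight (pathGraph (2 * m)) (pathLabel (2 * m) (pathEdgeLabel m)) a +
        ∑ j ∈ range (2 * n), crossLabel m n a j =
      if a.val % 2 = 0 then 2 * m * n ^ 2 + 8 * m * n - (n + 2)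
      else 6 * m * n ^ 2 + 4 * m - n := by
  have hsplit : ∑ j ∈ range (2 * n), crossLabel m n a j =
      2 * m * (∑ j ∈ range (2 * n), hiDigit n a j + 2 * n) +
        ∑ j ∈ range (2 * n), loDigit m n a j := by
    simp only [crossLabel]
    rw [sum_add_distrib, ← mul_sum, sum_add_distrib, sum_const, card_range, smul_eq_mul, mul_one]
  have hpath := pathWeight_add_lastColPerm hm a
  have hgauss := sum_range_id_mul_two n
  have heven := sum_evenRowDigit hn
  rw [hsplit, sum_loDigit_row hn a.isLt]
  have h8 : n + 2 ≤ 2 * m * n ^ 2 + 8 * m * n := by nlinarith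
  have h6 : n ≤ 6 * m * n ^ 2 + 4 * m := by nlinarith
  split_ifs at hpath ⊢ with hpar
  · simp only [hiDigit, if_pos hpar]
    zify [hn, h8, show 3 ≤ 4 * m by omega, show 1 ≤ 2 * n by omega,
      show 1 ≤ 2 * m by omega] at *
    linear_combination hpath + 2 * m * heven + 2 * m * hgauss
  · have hodd := sum_hiDigit_row_odd (n := n) (i := a) (by omega)
    zify [hn, h6, show 1 ≤ 4 * m by omega, show 1 ≤ 2 * n by omega,
      show 1 ≤ 2 * m by omega] at *
    linear_combination hpath + 2 * m * hodd - 2 * m * heven - 2 * m * hgauss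

lemma evenRow_ne_oddRow (hm : 1 ≤ m) (hn : 1 ≤ n) :
    2 * m * n ^ 2 + 8 * m * n - (n + 2) ≠ 6 * m * n ^ 2 + 4 * m - n := by
  have h8 : n + 2 ≤ 2 * m * n ^ 2 + 8 * m * n := by nlinarith
  have h6 : n ≤ 6 * m * n ^ 2 + 4 * m := by nlinarith
  zify [h8, h6]
  have hm' : (1 : ℤ) ≤ m := by exact_mod_cast hm
  nlinarith [mul_nonneg (by linarith : (0 : ℤ) ≤ m) (sq_nonneg ((n : ℤ) - 1))]

lemma oddRow_ne_col (hm : 1 ≤ m) (hn : 1 ≤ n) :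
    6 * m * n ^ 2 + 4 * m - n ≠ 4 * m ^ 2 * n + 4 * m ^ 2 - m := by
  have h6 : n ≤ 6 * m * n ^ 2 + 4 * m := by nlinarith
  have h4 : m ≤ 4 * m ^ 2 * n + 4 * m ^ 2 := by nlinarith
  zify [h6, h4]
  intro h
  have hm' : (1 : ℤ) ≤ m := by exact_mod_cast hm
  -- Modulo `m` the equation says `m ∣ n`; for `n = mk` it has no solution with `k ≥ 1`.
  obtain ⟨k, hkdef⟩ : ∃ k : ℤ, k = 6 * n ^ 2 + 5 - 4 * m * n - 4 * m := ⟨_, rfl⟩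
  have hk : (n : ℤ) = m * k := by linear_combination -h - m * hkdef
  have hk1 : 1 ≤ k := by nlinarith
  have hk' : 6 * m ^ 2 * k ^ 2 + 5 - 4 * m ^ 2 * k - 4 * m - k = 0 := by
    linear_combination -hkdef - (6 * n + 6 * m * k - 4 * m) * hk
  nlinarith [mul_nonneg (by linarith : (0 : ℤ) ≤ k - 1)
    (by nlinarith : (0 : ℤ) ≤ 6 * m ^ 2 * k + 2 * m ^ 2 - 1), sq_nonneg ((m : ℤ) - 1)]

lemma evenRow_ne_col (hm : 1 ≤ m) (hn : 1 ≤ n) (hmn : ¬(m = 1 ∧ n = 1)) :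
    2 * m * n ^ 2 + 8 * m * n - (n + 2) ≠ 4 * m ^ 2 * n + 4 * m ^ 2 - m := by
  have h8 : n + 2 ≤ 2 * m * n ^ 2 + 8 * m * n := by nlinarith
  have h4 : m ≤ 4 * m ^ 2 * n + 4 * m ^ 2 := by nlinarith
  zify [h8, h4]
  intro h
  have hm' : (1 : ℤ) ≤ m := by exact_mod_cast hm
  -- Modulo `m` the equation says `m ∣ n + 2`; for `n + 2 = mk` it becomes
  -- `2km²(k - 2) + 4m = k + 7`, whose only positive solution is `m = 1`, `k = 3`.
  obtain ⟨k, hkdef⟩ : ∃ k : ℤ, k = 2 * n ^ 2 + 8 * n - 4 * m * n - 4 * m + 1 := ⟨_, rfl⟩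
  have hk : (n : ℤ) + 2 = m * k := by linear_combination -h - m * hkdef
  have hk1 : 1 ≤ k := by nlinarith
  have hk' : 2 * k * m ^ 2 * (k - 2) + 4 * m - 7 - k = 0 := by
    linear_combination -hkdef - (2 * n + 2 * m * k + 4 - 4 * m) * hk
  obtain rfl | rfl | hk3 : k = 1 ∨ k = 2 ∨ 3 ≤ k := by omega
  · nlinarith [sq_nonneg ((m : ℤ) - 1)]
  · omega
  obtain hm1 | hm2 : (m : ℤ) = 1 ∨ 2 ≤ m := by omega
  · rw [hm1] at hk hk'
    have hk3' : k = 3 := by nlinarith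
    exact hmn ⟨by omega, by rw [hk3'] at hk; omega⟩
  · nlinarith [mul_nonneg (mul_nonneg (by linarith : (0 : ℤ) ≤ k)
      (by linarith : (0 : ℤ) ≤ k - 2)) (by nlinarith : (0 : ℤ) ≤ m ^ 2 - 4)]

end Weights

/-- Theorem: For all integers `m, n ≥ 1`, `χ_la(P_{2m} ∨ O_{2n}) = 3`. -/
theorem chiLA_path_join_null_even (m n : ℕ) (hm : 1 ≤ m) (hn : 1 ≤ n) :
    chiLA (joinG (pathGraph (2 * m)) (⊥ : SimpleGraph (Fin (2 * n)))) = 3 := by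
  by_cases hmn : m = 1 ∧ n = 1
  · -- Here `crossLabel` would give the even path vertices and `O_2` the same weight `7`.
    obtain ⟨rfl, rfl⟩ := hmn
    refine chiLA_joinG_pathGraph_bot_eq_three (jl := ![![2, 3], ![5, 4]]) (x := 6) (y := 10)
      (c := 7) (by norm_num) (by norm_num) (bijOn_pathEdgeLabel le_rfl)
      (bijOn_univ_Icc_of_injective (by decide) (by decide) rfl) (fun i => ?_) (by decide)
      (by decide) (by decide) (by decide)
    rw [vertexWeight_pathLabel]
    revert i
    decide
  · exact chiLA_joinG_pathGraph_bot_eq_three (by omega) (by omega) (bijOn_pathEdgeLabel hm)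
      (bijOn_crossLabel hm)
      (fun i => (Fin.sum_univ_eq_sum_range (crossLabel m n i ·) _).symm ▸
        pathWeight_add_sum_crossLabel hm hn i)
      (fun j => (Fin.sum_univ_eq_sum_range (crossLabel m n · j) _).trans
        (sum_crossLabel_col hm j.isLt))
      (evenRow_ne_oddRow hm hn) (evenRow_ne_col hm hn hmn) (oddRow_ne_col hm hn)
end

section
/- Let G be a graph of size q and suppose f is a local antimagic labeling of G whose induced vertex labeling f⁺ takes exactly two distinct values x and y with x < y. Let X be the number of vertices u with f⁺(u) = x and Y the number of vertices u with f⁺(u) = y. Then G is a bipartite graph whose two parts have sizes X and Y, X > Y, and xX = yY = q(q+1)/2. -/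
/-!
Adjacent vertices get different weights and only the two weights `x ≠ y` occur, so every edge
joins a vertex of weight `x` to one of weight `y`. Hence the two weight classes form a
bipartition, and summing the weights over either class counts each edge label exactly once:
`x X = y Y = 1 + ⋯ + q = q(q+1)/2`. Since `x < y`, this forces `X > Y`.
-/

open Finset SimpleGraph
open scoped Classical

theorem Finset.sum_Icc_one_id_mul_two (n : ℕ) : (∑ i ∈ Icc 1 n, i) * 2 = n * (n + 1) := by
  have h : ∑ i ∈ range (n + 1), i = ∑ i ∈ Icc 1 n, i := by
    rw [range_eq_Ico, sum_eq_sum_Ico_succ_bot n.succ_pos, zero_add, zero_add, Nat.succ_eq_add_one,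
      Ico_add_one_right_eq_Icc]
  rw [← h, sum_range_id_mul_two, Nat.add_sub_cancel, mul_comm]

namespace SimpleGraph

variable {V : Type*} [Fintype V] {G : SimpleGraph V}

theorem sum_edgeFinset_eq_sum_Icc_of_bijOn {f : Sym2 V → ℕ} {n : ℕ}
    (hf : Set.BijOn f G.edgeSet (Set.Icc 1 n)) :
    ∑ e ∈ G.edgeFinset, f e = ∑ i ∈ Icc 1 n, i :=
  sum_nbij f (fun e he => by simpa using hf.mapsTo (mem_edgeFinset.mp he))
    (by simpa using hf.injOn) (by simpa using hf.surjOn) fun _ _ => rfl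

theorem sum_vertexWeight_eq_of_card_filter_mem_eq_one (f : Sym2 V → ℕ) {A : Finset V}
    (hA : ∀ e ∈ G.edgeSet, #{u ∈ A | u ∈ e} = 1) :
    ∑ u ∈ A, vertexWeight G f u = ∑ e ∈ G.edgeFinset, f e :=
  calc ∑ u ∈ A, vertexWeight G f u
      = ∑ e ∈ G.edgeFinset, ∑ u ∈ A, if u ∈ e then f e else 0 := by
        simp only [vertexWeight, sum_filter]; exact sum_comm
    _ = ∑ e ∈ G.edgeFinset, #{u ∈ A | u ∈ e} * f e := by
        simp only [← sum_filter, sum_const, smul_eq_mul]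
    _ = ∑ e ∈ G.edgeFinset, f e :=
        sum_congr rfl fun e he => by rw [hA e (mem_edgeFinset.mp he), one_mul]

section TwoColoring

variable {α : Type*} [DecidableEq α] {c : V → α} {a b : α}

theorem card_filter_mem_edge_eq_one (hc : ∀ ⦃u v⦄, G.Adj u v → c u ≠ c v)
    (hab : ∀ u, c u = a ∨ c u = b) {e : Sym2 V} (he : e ∈ G.edgeSet) :
    #{w | c w = a ∧ w ∈ e} = 1 := by
  induction e using Sym2.ind with
  | _ u v =>
    have hfilter :
        ({w | c w = a ∧ w ∈ s(u, v)} : Finset V) = ({u, v} : Finset V).filter (c · = a) := by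
      ext w; simp [and_comm]
    have hexactly : (c u = a ∧ c v ≠ a) ∨ (c u ≠ a ∧ c v = a) := by
      have := hc he; grind [hab u, hab v]
    rw [hfilter, filter_insert, filter_singleton]
    rcases hexactly with ⟨hu, hv⟩ | ⟨hu, hv⟩ <;> simp [hu, hv]

theorem sum_vertexWeight_filter_eq_sum_edgeFinset (f : Sym2 V → ℕ)
    (hc : ∀ ⦃u v⦄, G.Adj u v → c u ≠ c v) (hab : ∀ u, c u = a ∨ c u = b) :
    ∑ u ∈ {u | c u = a}, vertexWeight G f u = ∑ e ∈ G.edgeFinset, f e :=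
  sum_vertexWeight_eq_of_card_filter_mem_eq_one f fun e he => by
    rw [filter_filter]; exact card_filter_mem_edge_eq_one hc hab he

end TwoColoring

end SimpleGraph

/-- Theorem: Let `G` be a graph of size `q` and `f` a local antimagic labeling of `G` whose
induced vertex labeling takes exactly two distinct values `x < y`. With `X` the number of
vertices of weight `x` and `Y` the number of vertices of weight `y`, `G` is bipartite with
parts of sizes `X` and `Y`, `X > Y`, and `xX = yY = q(q+1)/2`. -/
theorem localAntimagic_two_colors {V : Type*} [Fintype V] (G : SimpleGraph V)
    (q x y X Y : ℕ) (hq : G.edgeSet.ncard = q)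
    (f : Sym2 V → ℕ) (hf : IsLocalAntimagic G f)
    (himg : Finset.univ.image (vertexWeight G f) = {x, y}) (hxy : x < y)
    (hX : X = (Finset.univ.filter (fun u => vertexWeight G f u = x)).card)
    (hY : Y = (Finset.univ.filter (fun u => vertexWeight G f u = y)).card) :
    (∃ A B : Finset V, A ∪ B = Finset.univ ∧ Disjoint A B ∧
      (∀ u ∈ A, ∀ v ∈ A, ¬ G.Adj u v) ∧ (∀ u ∈ B, ∀ v ∈ B, ¬ G.Adj u v) ∧
      A.card = X ∧ B.card = Y) ∧
    X > Y ∧ x * X = q * (q + 1) / 2 ∧ y * Y = q * (q + 1) / 2 := by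
  obtain ⟨hbij, hproper⟩ := hf
  have htwo : ∀ u, vertexWeight G f u = x ∨ vertexWeight G f u = y := fun u => by
    simpa [himg] using mem_image_of_mem (vertexWeight G f) (mem_univ u)
  have hedges : (∑ e ∈ G.edgeFinset, f e) * 2 = q * (q + 1) := by
    rw [sum_edgeFinset_eq_sum_Icc_of_bijOn (hq ▸ hbij), sum_Icc_one_id_mul_two]
  have hxX : x * X * 2 = q * (q + 1) := by
    rw [← hedges, ← sum_vertexWeight_filter_eq_sum_edgeFinset f hproper htwo, hX, mul_comm x,
      sum_const_nat fun u hu => (mem_filter.mp hu).2]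
  have hyY : y * Y * 2 = q * (q + 1) := by
    rw [← hedges, ← sum_vertexWeight_filter_eq_sum_edgeFinset f hproper fun u => (htwo u).symm,
      hY, mul_comm y, sum_const_nat fun u hu => (mem_filter.mp hu).2]
  have hY_pos : 0 < Y := by
    obtain ⟨u, -, hu⟩ := mem_image.mp (himg ▸ mem_insert_of_mem (mem_singleton_self y))
    exact hY ▸ card_pos.mpr ⟨u, mem_filter.mpr ⟨mem_univ u, hu⟩⟩
  have hXY : Y < X := Nat.lt_of_mul_lt_mul_left (a := x) <| calc
    x * Y < y * Y := Nat.mul_lt_mul_of_pos_right hxy hY_pos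
    _ = x * X := by omega
  have hindep : ∀ z, ∀ u ∈ ({u | vertexWeight G f u = z} : Finset V),
      ∀ v ∈ ({u | vertexWeight G f u = z} : Finset V), ¬ G.Adj u v :=
    fun z u hu v hv huv => hproper huv ((mem_filter.mp hu).2.trans (mem_filter.mp hv).2.symm)
  refine ⟨⟨_, _, ?_, ?_, hindep x, hindep y, hX.symm, hY.symm⟩, hXY, by omega, by omega⟩
  · ext u; simpa using htwo u
  · exact disjoint_filter.mpr fun u _ hux huy => hxy.ne (hux ▸ huy)
end

section
/- Let G be a d-regular graph of size q. If f is a local antimagic labeling of G, then the labeling g defined by g(e) = q + 1 − f(e) for every edge e is also a local antimagic labeling of G with c(g) = c(f). Moreover, if c(f) = χ_la(G) and e is an edge with f(e) = 1 or f(e) = q, then χ_la(G − e) ≤ χ_la(G). -/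
open Finset SimpleGraph
open scoped Classical

/-!
Since every edge label lies in `{1, …, q}`, replacing `f` by `q + 1 - f` turns each vertex weight
`w` into `d (q + 1) - w`, and on a `d`-regular graph this is an injective change of the weights, so
both the local antimagic property and the number of weights are preserved. If an edge `e` carries
label `1`, deleting it and lowering all other labels by one gives a labeling of `G - e` onto
`{1, …, q - 1}` whose weights are `w - d` (the deleted edge would have contributed `1 - 1 = 0`);
again this is injective. An edge labelled `q` is reduced to the first case by the complement.
-/

lemma Nat.bijOn_Icc_rev (n : ℕ) :
    Set.BijOn (fun a => n + 1 - a) (Set.Icc 1 n) (Set.Icc 1 n) := by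
  refine Set.InvOn.bijOn (f' := fun a => n + 1 - a) ⟨?_, ?_⟩ ?_ ?_ <;>
    intro a ha <;> simp only [Set.mem_Icc] at ha ⊢ <;> omega

lemma Nat.bijOn_pred_Icc_sdiff_one (n : ℕ) :
    Set.BijOn (fun a => a - 1) (Set.Icc 1 n \ {1}) (Set.Icc 1 (n - 1)) := by
  refine Set.InvOn.bijOn (f' := fun a => a + 1) ⟨?_, ?_⟩ ?_ ?_ <;>
    intro a ha <;> simp only [Set.mem_sdiff, Set.mem_Icc, Set.mem_singleton_iff] at ha ⊢ <;> omega

namespace SimpleGraph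

variable {V : Type*} {G : SimpleGraph V}

lemma card_filter_mem_edgeFinset [Fintype V] (x : V) :
    #{e ∈ G.edgeFinset | x ∈ e} = G.degree x := by
  rw [← incidenceFinset_eq_filter, card_incidenceFinset_eq_degree]

lemma edgeSet_ncard_deleteEdges_singleton {e : Sym2 V} (he : e ∈ G.edgeSet) :
    (G.deleteEdges {e}).edgeSet.ncard = G.edgeSet.ncard - 1 := by
  rw [edgeSet_deleteEdges, Set.ncard_sdiff_singleton_of_mem he]

end SimpleGraph

section VertexWeight

variable {V : Type*} [Fintype V] {G H : SimpleGraph V} {f g : Sym2 V → ℕ}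

lemma vertexWeight_congr (h : ∀ e ∈ G.edgeSet, f e = g e) (x : V) :
    vertexWeight G f x = vertexWeight G g x :=
  sum_congr rfl fun e he => h e (mem_edgeFinset.mp (mem_filter.mp he).1)

lemma vertexWeight_add (x : V) :
    vertexWeight G (fun e => f e + g e) x = vertexWeight G f x + vertexWeight G g x :=
  sum_add_distrib

lemma vertexWeight_const (c : ℕ) (x : V) :
    vertexWeight G (fun _ => c) x = G.degree x * c := by
  rw [vertexWeight, sum_const, card_filter_mem_edgeFinset, smul_eq_mul]

lemma vertexWeight_deleteEdges_of_eq_zero {s : Set (Sym2 V)} (h : ∀ e ∈ s, f e = 0) (x : V) :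
    vertexWeight (G.deleteEdges s) f x = vertexWeight G f x := by
  refine sum_subset (fun e he => ?_) (fun e he he' => h e ?_)
  · simp only [mem_filter, mem_edgeFinset, edgeSet_deleteEdges, Set.mem_sdiff] at he ⊢
    exact ⟨he.1.1, he.2⟩
  · simp only [mem_filter, mem_edgeFinset, edgeSet_deleteEdges, Set.mem_sdiff] at he he'
    tauto

lemma vertexWeight_rev_add {q : ℕ} (hf : ∀ e ∈ G.edgeSet, f e ≤ q) (x : V) :
    vertexWeight G (fun e => q + 1 - f e) x + vertexWeight G f x = G.degree x * (q + 1) := by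
  rw [← vertexWeight_add, ← vertexWeight_const]
  exact vertexWeight_congr (fun e he => by have := hf e he; omega) x

lemma vertexWeight_pred_add (hf : ∀ e ∈ G.edgeSet, 1 ≤ f e) (x : V) :
    vertexWeight G (fun e => f e - 1) x + G.degree x = vertexWeight G f x := by
  rw [← mul_one (G.degree x), ← vertexWeight_const, ← vertexWeight_add]
  exact vertexWeight_congr (fun e he => by have := hf e he; omega) x

lemma IsLocalAntimagic.of_vertexWeight_eq_comp (hf : IsLocalAntimagic G f) (hHG : H ≤ G)
    (hg : Set.BijOn g H.edgeSet (Set.Icc 1 H.edgeSet.ncard)) {φ : ℕ → ℕ}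
    (hφ : Set.InjOn φ (Set.range (vertexWeight G f)))
    (hw : vertexWeight H g = φ ∘ vertexWeight G f) :
    IsLocalAntimagic H g ∧ colorCount H g = colorCount G f := by
  refine ⟨⟨hg, fun x y hxy hxy' => hf.2 (hHG hxy) ?_⟩, ?_⟩
  · rw [hw] at hxy'
    exact hφ (Set.mem_range_self x) (Set.mem_range_self y) hxy'
  · rw [colorCount, colorCount, hw, ← image_image]
    refine card_image_of_injOn ?_
    simpa only [coe_image, coe_univ, Set.image_univ] using hφ

lemma chiLA_le_colorCount (hf : IsLocalAntimagic G f) : chiLA G ≤ colorCount G f :=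
  Nat.sInf_le ⟨f, hf, rfl⟩

lemma IsLocalAntimagic.label_mem_Icc (hf : IsLocalAntimagic G f) {e : Sym2 V}
    (he : e ∈ G.edgeSet) : f e ∈ Set.Icc 1 G.edgeSet.ncard :=
  hf.1.mapsTo he

theorem IsLocalAntimagic.rev {d : ℕ} (hreg : G.IsRegularOfDegree d) (hf : IsLocalAntimagic G f) :
    IsLocalAntimagic G (fun e => G.edgeSet.ncard + 1 - f e) ∧
      colorCount G (fun e => G.edgeSet.ncard + 1 - f e) = colorCount G f := by
  have hsum (x : V) := vertexWeight_rev_add (fun e he => (hf.label_mem_Icc he).2) x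
  simp only [hreg _] at hsum
  have hinj : Set.InjOn (fun w => d * (G.edgeSet.ncard + 1) - w)
      (Set.range (vertexWeight G f)) := by
    rintro _ ⟨x, rfl⟩ _ ⟨y, rfl⟩ hxy
    have := hsum x
    have := hsum y
    dsimp only at hxy
    omega
  have hw : vertexWeight G (fun e => G.edgeSet.ncard + 1 - f e) =
      (fun w => d * (G.edgeSet.ncard + 1) - w) ∘ vertexWeight G f := funext fun x => by
    have := hsum x
    dsimp only [Function.comp_apply]
    omega
  exact hf.of_vertexWeight_eq_comp le_rfl ((Nat.bijOn_Icc_rev _).comp hf.1) hinj hw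

theorem IsLocalAntimagic.chiLA_deleteEdges_le {d : ℕ} (hreg : G.IsRegularOfDegree d)
    (hf : IsLocalAntimagic G f) {e : Sym2 V} (he : e ∈ G.edgeSet) (he1 : f e = 1) :
    chiLA (G.deleteEdges {e}) ≤ colorCount G f := by
  have hbij : Set.BijOn (fun a => f a - 1) (G.deleteEdges {e}).edgeSet
      (Set.Icc 1 (G.deleteEdges {e}).edgeSet.ncard) := by
    rw [edgeSet_ncard_deleteEdges_singleton he, edgeSet_deleteEdges]
    have hdiff := hf.1.sdiff_singleton he
    rw [he1] at hdiff
    exact (Nat.bijOn_pred_Icc_sdiff_one _).comp hdiff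
  have hsum (x : V) := vertexWeight_pred_add (fun e he => (hf.label_mem_Icc he).1) x
  simp only [hreg _] at hsum
  have hinj : Set.InjOn (fun w => w - d) (Set.range (vertexWeight G f)) := by
    rintro _ ⟨x, rfl⟩ _ ⟨y, rfl⟩ hxy
    have := hsum x
    have := hsum y
    dsimp only at hxy
    omega
  have hw : vertexWeight (G.deleteEdges {e}) (fun a => f a - 1) =
      (fun w => w - d) ∘ vertexWeight G f := funext fun x => by
    rw [vertexWeight_deleteEdges_of_eq_zero (by simp [he1]), Function.comp_apply, ← hsum x]
    omega
  obtain ⟨hanti, hcount⟩ := hf.of_vertexWeight_eq_comp (deleteEdges_le _) hbij hinj hw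
  exact hcount ▸ chiLA_le_colorCount hanti

end VertexWeight

/-- Theorem: Let `G` be a `d`-regular graph of size `q`. If `f` is a local antimagic labeling
of `G`, then `g = q + 1 − f` is also a local antimagic labeling of `G` with `c(g) = c(f)`.
Moreover, if `c(f) = χ_la(G)` and `e` is an edge with `f(e) = 1` or `f(e) = q`, then
`χ_la(G − e) ≤ χ_la(G)`. -/
theorem localAntimagic_complement_regular {V : Type*} [Fintype V] (G : SimpleGraph V)
    (d q : ℕ) (hreg : G.IsRegularOfDegree d) (hq : G.edgeSet.ncard = q)
    (f : Sym2 V → ℕ) (hf : IsLocalAntimagic G f) :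
    (IsLocalAntimagic G (fun e => q + 1 - f e) ∧
      colorCount G (fun e => q + 1 - f e) = colorCount G f) ∧
    (colorCount G f = chiLA G →
      ∀ e ∈ G.edgeSet, (f e = 1 ∨ f e = q) →
        chiLA (G.deleteEdges {e}) ≤ chiLA G) := by
  subst hq
  have hrev := hf.rev hreg
  refine ⟨hrev, fun hopt e he hfe => hopt ▸ ?_⟩
  rcases hfe with hf1 | hfq
  · exact hf.chiLA_deleteEdges_le hreg he hf1
  · rw [← hrev.2]
    exact hrev.1.chiLA_deleteEdges_le hreg he (by simp [hfq])
end

section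
/- Let G be a graph of size q and f a local antimagic labeling of G such that for all vertices x, y of G: (i) if f⁺(x) = f⁺(y) then deg(x) = deg(y), and (ii) if f⁺(x) ≠ f⁺(y) then (q+1)(deg(x) − deg(y)) ≠ f⁺(x) − f⁺(y). Then the labeling g defined by g(e) = q + 1 − f(e) for every edge e is also a local antimagic labeling of G with c(g) = c(f). -/
open Finset SimpleGraph
open scoped Classical

/-!
Since `f` maps the edges onto `{1, …, q}`, every edge label satisfies `g e + f e = q + 1`, so
`g⁺(x) + f⁺(x) = (q + 1) deg(x)` at every vertex. Hypothesis (i) makes `g⁺(x) = g⁺(y)` follow from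
`f⁺(x) = f⁺(y)`, and hypothesis (ii) gives the converse. Hence `f⁺` and `g⁺` induce the same
partition of the vertices: adjacent vertices stay separated and the number of labels is unchanged.
-/

lemma Set.bijOn_tsub_Icc (n : ℕ) :
    Set.BijOn (fun k => n + 1 - k) (Set.Icc 1 n) (Set.Icc 1 n) := by
  refine ⟨fun k hk => ?_, fun k hk l hl hkl => ?_, fun k hk => ⟨n + 1 - k, ?_, ?_⟩⟩ <;>
    simp only [Set.mem_Icc] at * <;> omega

lemma Finset.card_image_le_card_image_of_eq_imp_eq {α β γ : Type*} [DecidableEq β]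
    [DecidableEq γ] {s : Finset α} {a : α → β} {b : α → γ}
    (hab : ∀ x ∈ s, ∀ y ∈ s, a x = a y → b x = b y) : #(s.image b) ≤ #(s.image a) := by
  rcases s.eq_empty_or_nonempty with rfl | ⟨x₀, -⟩
  · simp
  have : Nonempty α := ⟨x₀⟩
  refine card_le_card_of_surjOn (fun z => b (Function.invFunOn a s z)) ?_
  intro c hc
  obtain ⟨x, hx, rfl⟩ := mem_image.mp (mem_coe.mp hc)
  have hax : ∃ y ∈ (s : Set α), a y = a x := ⟨x, hx, rfl⟩
  exact ⟨a x, mem_coe.mpr (mem_image_of_mem a hx),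
    hab _ (Function.invFunOn_mem hax) x hx (Function.invFunOn_eq hax)⟩

lemma Finset.card_image_eq_card_image_of_eq_iff_eq {α β γ : Type*} [DecidableEq β]
    [DecidableEq γ] {s : Finset α} {a : α → β} {b : α → γ}
    (hab : ∀ x ∈ s, ∀ y ∈ s, a x = a y ↔ b x = b y) : #(s.image a) = #(s.image b) :=
  le_antisymm (card_image_le_card_image_of_eq_imp_eq fun x hx y hy => (hab x hx y hy).mpr)
    (card_image_le_card_image_of_eq_imp_eq fun x hx y hy => (hab x hx y hy).mp)

section

variable {V : Type*} [Fintype V] (G : SimpleGraph V)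

lemma vertexWeight_tsub_add_vertexWeight {c : ℕ} {f : Sym2 V → ℕ}
    (hf : ∀ e ∈ G.edgeSet, f e ≤ c) (x : V) :
    vertexWeight G (fun e => c - f e) x + vertexWeight G f x = c * G.degree x := by
  have hsum : ∀ e ∈ G.edgeFinset.filter (fun e => x ∈ e), c - f e + f e = c := fun e he =>
    Nat.sub_add_cancel (hf e (mem_edgeFinset.mp (mem_filter.mp he).1))
  rw [vertexWeight, vertexWeight, ← sum_add_distrib, sum_congr rfl hsum, sum_const,
    ← incidenceFinset_eq_filter, card_incidenceFinset_eq_degree, smul_eq_mul, mul_comm]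

lemma vertexWeight_tsub_eq_iff {c : ℕ} {f : Sym2 V → ℕ} (hf : ∀ e ∈ G.edgeSet, f e ≤ c)
    (h1 : ∀ x y : V, vertexWeight G f x = vertexWeight G f y → G.degree x = G.degree y)
    (h2 : ∀ x y : V, vertexWeight G f x ≠ vertexWeight G f y →
      (c : ℤ) * ((G.degree x : ℤ) - (G.degree y : ℤ)) ≠
        (vertexWeight G f x : ℤ) - (vertexWeight G f y : ℤ))
    (x y : V) :
    vertexWeight G (fun e => c - f e) x = vertexWeight G (fun e => c - f e) y ↔
      vertexWeight G f x = vertexWeight G f y := by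
  have hx := vertexWeight_tsub_add_vertexWeight G hf x
  have hy := vertexWeight_tsub_add_vertexWeight G hf y
  constructor
  · intro hg
    by_contra hne
    apply h2 x y hne
    zify at hx hy hg
    linear_combination hg - hx + hy
  · intro hfxy
    rw [h1 x y hfxy] at hx
    omega

end

/-- Theorem: Let `G` be a graph of size `q` and `f` a local antimagic labeling of `G` such that
for all vertices `x, y`: (i) `f⁺(x) = f⁺(y)` implies `deg(x) = deg(y)`, and (ii)
`f⁺(x) ≠ f⁺(y)` implies `(q+1)(deg(x) − deg(y)) ≠ f⁺(x) − f⁺(y)`. Then `g = q + 1 − f` is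
also a local antimagic labeling of `G` with `c(g) = c(f)`. -/
theorem localAntimagic_complement {V : Type*} [Fintype V] (G : SimpleGraph V)
    (q : ℕ) (hq : G.edgeSet.ncard = q)
    (f : Sym2 V → ℕ) (hf : IsLocalAntimagic G f)
    (h1 : ∀ x y : V, vertexWeight G f x = vertexWeight G f y → G.degree x = G.degree y)
    (h2 : ∀ x y : V, vertexWeight G f x ≠ vertexWeight G f y →
      ((q : ℤ) + 1) * ((G.degree x : ℤ) - (G.degree y : ℤ)) ≠
        (vertexWeight G f x : ℤ) - (vertexWeight G f y : ℤ)) :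
    IsLocalAntimagic G (fun e => q + 1 - f e) ∧
      colorCount G (fun e => q + 1 - f e) = colorCount G f := by
  obtain ⟨hbij, hadj⟩ := hf
  rw [hq] at hbij
  have hle : ∀ e ∈ G.edgeSet, f e ≤ q + 1 := fun e he => (hbij.mapsTo he).2.trans q.le_succ
  have hweight := vertexWeight_tsub_eq_iff G hle h1 (by push_cast; exact h2)
  refine ⟨⟨?_, fun x y hxy hg => hadj hxy ((hweight x y).mp hg)⟩, ?_⟩
  · rw [hq]
    exact (Set.bijOn_tsub_Icc q).comp hbij
  · exact card_image_eq_card_image_of_eq_iff_eq fun x _ y _ => hweight x y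
end
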